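/- arXiv:1106.3288 — 3 statements merged into one kernel-verified Lean document; each statement's English description precedes it below -/
import Mathlib

section
/- For every a > 1 and every ε > 0, the second derivative of h_ε(ξ) = exp(-ε|ξ|^a) satisfies |h_ε''(ξ)| ≤ C/|ξ|² for all ξ ≠ 0, with constant C depending only on a and not on ε. -/
/-!
Put `t = ε |ξ|^a`. Away from the origin the chain rule gives
`ξ² h_ε''(ξ) = (a² t² - a (a - 1) t) e^{-t}`, and `tⁿ e^{-t} ≤ n!` for `t ≥ 0` bounds the right-hand
side by `2 a² + |a (a - 1)|`, uniformly in `ε ≥ 0`. Since `h_ε` is even, so is `h_ε''`, and it suffices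
to treat `ξ > 0`.
-/

open Real

lemma Function.Even.deriv_deriv {𝕜 F : Type*} [NontriviallyNormedField 𝕜] [NormedAddCommGroup F]
    [NormedSpace 𝕜 F] {f : 𝕜 → F} (hf : f.Even) (x : 𝕜) :
    deriv (deriv f) (-x) = deriv (deriv f) x := by
  have h := iteratedDeriv_comp_neg 2 f (-x)
  simp only [hf _, neg_neg, neg_one_sq, one_smul] at h
  simpa only [iteratedDeriv_succ, iteratedDeriv_zero] using h

lemma Real.pow_mul_exp_neg_le_factorial {t : ℝ} (ht : 0 ≤ t) (n : ℕ) :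
    t ^ n * exp (-t) ≤ n.factorial := by
  rw [exp_neg, ← div_eq_mul_inv, div_le_iff₀ (exp_pos t), ← div_le_iff₀' (by positivity)]
  exact pow_div_factorial_le_exp t ht n

lemma Real.abs_mul_sq_sub_mul_mul_exp_neg_le (b c : ℝ) {t : ℝ} (ht : 0 ≤ t) :
    |(b * t ^ 2 - c * t) * exp (-t)| ≤ 2 * |b| + |c| := by
  have h1 := pow_mul_exp_neg_le_factorial ht 1
  have h2 := pow_mul_exp_neg_le_factorial ht 2
  simp only [pow_one, Nat.factorial_one, Nat.factorial_two, Nat.cast_one, Nat.cast_ofNat] at h1 h2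
  calc |(b * t ^ 2 - c * t) * exp (-t)| = |b * (t ^ 2 * exp (-t)) - c * (t * exp (-t))| := by
        congr 1; ring
    _ ≤ |b * (t ^ 2 * exp (-t))| + |c * (t * exp (-t))| := abs_sub _ _
    _ = |b| * (t ^ 2 * exp (-t)) + |c| * (t * exp (-t)) := by
        rw [abs_mul b, abs_mul c, abs_of_nonneg (by positivity : (0 : ℝ) ≤ t ^ 2 * exp (-t)),
          abs_of_nonneg (by positivity : (0 : ℝ) ≤ t * exp (-t))]
    _ ≤ 2 * |b| + |c| := by nlinarith [abs_nonneg b, abs_nonneg c]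

section

variable (ε a : ℝ)

lemma hasDerivAt_exp_neg_mul_abs_rpow {x : ℝ} (hx : 0 < x) :
    HasDerivAt (fun y => exp (-ε * |y| ^ a)) (-ε * a * x ^ (a - 1) * exp (-ε * x ^ a)) x := by
  have h := ((hasDerivAt_rpow_const (p := a) (Or.inl hx.ne')).const_mul (-ε)).exp
  refine (h.congr_of_eventuallyEq ?_).congr_deriv (by ring)
  filter_upwards [Ioi_mem_nhds hx] with y hy
  rw [abs_of_pos hy]

lemma hasDerivAt_deriv_exp_neg_mul_abs_rpow {x : ℝ} (hx : 0 < x) :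
    HasDerivAt (deriv fun y => exp (-ε * |y| ^ a))
      (((ε * a * x ^ (a - 1)) ^ 2 - ε * a * (a - 1) * x ^ (a - 2)) * exp (-ε * x ^ a)) x := by
  have h := (((hasDerivAt_rpow_const (p := a - 1) (Or.inl hx.ne')).const_mul (-ε * a)).mul
    (((hasDerivAt_rpow_const (p := a) (Or.inl hx.ne')).const_mul (-ε)).exp))
  refine (h.congr_of_eventuallyEq ?_).congr_deriv ?_
  · filter_upwards [Ioi_mem_nhds hx] with y hy
    exact (hasDerivAt_exp_neg_mul_abs_rpow ε a hy).deriv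
  · rw [show a - 1 - 1 = a - 2 by ring]
    ring

lemma deriv_deriv_exp_neg_mul_abs_rpow_of_pos {x : ℝ} (hx : 0 < x) :
    deriv (deriv fun y => exp (-ε * |y| ^ a)) x =
      (a ^ 2 * (ε * x ^ a) ^ 2 - a * (a - 1) * (ε * x ^ a)) * exp (-(ε * x ^ a)) / x ^ 2 := by
  have h1 : x ^ (a - 1) = x ^ a / x := by rw [rpow_sub hx, rpow_one]
  have h2 : x ^ (a - 2) = x ^ a / x ^ 2 := by rw [rpow_sub hx, rpow_two]
  rw [(hasDerivAt_deriv_exp_neg_mul_abs_rpow ε a hx).deriv, h1, h2, neg_mul]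
  field_simp

lemma abs_deriv_deriv_exp_neg_mul_abs_rpow_le {ε : ℝ} (hε : 0 ≤ ε) {x : ℝ} (hx : x ≠ 0) :
    |deriv (deriv fun y => exp (-ε * |y| ^ a)) x| ≤ (2 * a ^ 2 + |a * (a - 1)|) / x ^ 2 := by
  wlog hx_pos : 0 < x generalizing x
  · have h_even : Function.Even fun y : ℝ => exp (-ε * |y| ^ a) := fun y => by simp only [abs_neg]
    rw [← h_even.deriv_deriv, ← neg_sq x]
    exact this (neg_ne_zero.2 hx) (neg_pos.2 (hx.lt_or_gt.resolve_right hx_pos))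
  have ht : 0 ≤ ε * x ^ a := mul_nonneg hε (rpow_nonneg hx_pos.le a)
  rw [deriv_deriv_exp_neg_mul_abs_rpow_of_pos ε a hx_pos, abs_div,
    abs_of_pos (pow_pos hx_pos 2)]
  gcongr
  have h := abs_mul_sq_sub_mul_mul_exp_neg_le (a ^ 2) (a * (a - 1)) ht
  rwa [abs_of_nonneg (sq_nonneg a)] at h

end

theorem second_deriv_bound_general (a : ℝ) :
    ∃ C : ℝ, 0 < C ∧ ∀ ε : ℝ, 0 < ε → ∀ ξ : ℝ, ξ ≠ 0 →
      |deriv (deriv (fun ξ : ℝ => Real.exp (-ε * |ξ| ^ a))) ξ| ≤ C / |ξ| ^ 2 := by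
  refine ⟨2 * a ^ 2 + |a * (a - 1)| + 1, by positivity, fun ε hε ξ hξ => ?_⟩
  calc _ ≤ (2 * a ^ 2 + |a * (a - 1)|) / ξ ^ 2 :=
        abs_deriv_deriv_exp_neg_mul_abs_rpow_le a hε.le hξ
    _ ≤ _ := by rw [sq_abs]; exact div_le_div_of_nonneg_right (by linarith) (sq_nonneg ξ)

theorem second_deriv_bound (a : ℝ) (ha : 1 < a) :
    ∃ C : ℝ, 0 < C ∧ ∀ ε : ℝ, 0 < ε → ∀ ξ : ℝ, ξ ≠ 0 →
      |deriv (deriv (fun ξ : ℝ => Real.exp (-ε * |ξ| ^ a))) ξ| ≤ C / |ξ| ^ 2 :=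
  second_deriv_bound_general a
end

section
/- Let a > 1 and γ > 1. If s < (a/4)(1 − 1/γ), then with f_v as in the Dahlberg–Kenig type construction, ‖f_v‖_{H^s(ℝ)} → 0 as v → 0. -/
/-!
Substituting `η = v ξ + 1 / v`, the integrand vanishes unless `|ξ + v⁻²| ≤ r / v`, where
`r = v ^ (a - 1 - a / γ) ≤ v⁻¹`. On that interval, of length `2 r / v`, we have `|ξ| ≤ 2 v⁻²`,
so the weight `(1 + ξ²) ^ s` is at most `5 ^ s v ^ (-4 s)`, while the squared amplitude is at
most `v²`. The integral is therefore `≤ 2 · 5 ^ s · v ^ (a - 4 s - a / γ)`, and the exponent is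
positive precisely when `s < (a / 4) (1 - 1 / γ)`.
-/

open Real Set MeasureTheory Filter

lemma integral_le_mul_measureReal_of_eq_zero_off {α : Type*} [MeasurableSpace α] {μ : Measure α}
    {f : α → ℝ} {S : Set α} {K : ℝ} (hS : μ S < ⊤) (hf : ∀ x ∈ S, |f x| ≤ K)
    (h0 : ∀ x ∉ S, f x = 0) : ∫ x, f x ∂μ ≤ K * μ.real S := by
  rw [← setIntegral_eq_integral_of_forall_compl_eq_zero h0]
  exact (Real.le_norm_self _).trans
    (norm_setIntegral_le_of_norm_le_const hS fun x hx => (Real.norm_eq_abs _).trans_le (hf x hx))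

lemma one_add_sq_rpow_le {s v ξ : ℝ} (hs : 0 ≤ s) (hv0 : 0 < v) (hv1 : v ≤ 1)
    (hξ : |ξ| ≤ 2 / v ^ 2) : (1 + ξ ^ 2) ^ s ≤ 5 ^ s * v ^ (-4 * s) := by
  have hv4 : 1 ≤ 1 / v ^ 4 := by
    rw [le_div_iff₀ (by positivity), one_mul]; exact pow_le_one₀ hv0.le hv1
  have hξ2 : ξ ^ 2 ≤ 4 / v ^ 4 := by
    calc ξ ^ 2 = |ξ| ^ 2 := (sq_abs ξ).symm
      _ ≤ (2 / v ^ 2) ^ 2 := pow_le_pow_left₀ (abs_nonneg ξ) hξ 2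
      _ = 4 / v ^ 4 := by ring
  calc (1 + ξ ^ 2) ^ s ≤ (5 / v ^ 4) ^ s := by
        gcongr
        linarith [show 5 / v ^ 4 = 1 / v ^ 4 + 4 / v ^ 4 by ring]
    _ = 5 ^ s * v ^ (-4 * s) := by
        rw [div_rpow (by norm_num) (by positivity), neg_mul, rpow_neg hv0.le, div_eq_mul_inv,
          ← rpow_natCast_mul hv0.le]
        norm_num

lemma integral_one_add_sq_rpow_mul_rescaled_sq_le {s v r : ℝ} {h : ℝ → ℝ} (hs : 0 ≤ s)
    (hv0 : 0 < v) (hv1 : v ≤ 1) (hr0 : 0 ≤ r) (hr : r ≤ v⁻¹) (h_abs : ∀ η, |h η| ≤ 1)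
    (h_supp : ∀ η, r < |η| → h η = 0) :
    ∫ ξ, (1 + ξ ^ 2) ^ s * (v * h (v * ξ + 1 / v)) ^ 2 ≤ 2 * 5 ^ s * v ^ (1 - 4 * s) * r := by
  set S := Metric.closedBall (-(v ^ 2)⁻¹) (r / v)
  have hmem : ∀ ξ, ξ ∈ S ↔ |v * ξ + 1 / v| ≤ r := fun ξ => by
    have hrescale : v * ξ + 1 / v = v * (ξ - -(v ^ 2)⁻¹) := by field_simp; ring
    rw [hrescale, abs_mul, abs_of_pos hv0, ← le_div_iff₀' hv0, Metric.mem_closedBall,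
      Real.dist_eq]
  have hbound : ∀ ξ ∈ S, |(1 + ξ ^ 2) ^ s * (v * h (v * ξ + 1 / v)) ^ 2|
      ≤ 5 ^ s * v ^ (-4 * s) * v ^ 2 := by
    intro ξ hξ
    have hξ' : |ξ| ≤ 2 / v ^ 2 := by
      have hdist := Metric.mem_closedBall.1 hξ
      rw [Real.dist_eq, sub_neg_eq_add] at hdist
      have hrv : r / v ≤ (v ^ 2)⁻¹ :=
        calc r / v ≤ v⁻¹ / v := by gcongr
          _ = (v ^ 2)⁻¹ := by field_simp
      calc |ξ| = |(ξ + (v ^ 2)⁻¹) - (v ^ 2)⁻¹| := by ring_nf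
        _ ≤ |ξ + (v ^ 2)⁻¹| + |(v ^ 2)⁻¹| := abs_sub _ _
        _ ≤ (v ^ 2)⁻¹ + (v ^ 2)⁻¹ := by rw [abs_of_pos (inv_pos.2 (pow_pos hv0 2))]; linarith
        _ = 2 / v ^ 2 := by ring
    have hsq : (v * h (v * ξ + 1 / v)) ^ 2 ≤ v ^ 2 := by
      rw [mul_pow]
      exact mul_le_of_le_one_right (sq_nonneg v) (sq_le_one_iff_abs_le_one _ |>.2 (h_abs _))
    rw [abs_of_nonneg (by positivity)]
    exact mul_le_mul (one_add_sq_rpow_le hs hv0 hv1 hξ') hsq (sq_nonneg _) (by positivity)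
  have hzero : ∀ ξ ∉ S, (1 + ξ ^ 2) ^ s * (v * h (v * ξ + 1 / v)) ^ 2 = 0 := fun ξ hξ => by
    rw [h_supp _ (not_le.1 ((hmem ξ).not.1 hξ))]; ring
  calc _ ≤ 5 ^ s * v ^ (-4 * s) * v ^ 2 * volume.real S :=
        integral_le_mul_measureReal_of_eq_zero_off measure_closedBall_lt_top hbound hzero
    _ = 2 * 5 ^ s * v ^ (1 - 4 * s) * r := by
        rw [Real.volume_real_closedBall (by positivity), sub_eq_add_neg, rpow_add hv0, rpow_one,
          ← neg_mul]
        field_simp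

theorem sobolev_norm_tendsto_zero_general (a γ s : ℝ) (hs : 0 ≤ s)
    (hcrit : s < a / 4 * (1 - 1 / γ)) (g : ℝ → ℝ → ℝ)
    (hg0 : ∀ v η, 0 ≤ g v η) (hg1 : ∀ v η, g v η ≤ 1)
    (hsupp : ∀ v ∈ Ioo (0:ℝ) 1, ∀ η : ℝ, v ^ ((a - 1) - a / γ) < |η| → g v η = 0) :
    Tendsto (fun v : ℝ => ∫ ξ : ℝ, (1 + ξ ^ 2) ^ s * (v * g v (v * ξ + 1 / v)) ^ 2)
      (nhdsWithin 0 (Ioi 0)) (nhds 0) := by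
  have hε : 0 < a - 4 * s - a / γ := by
    have : a / 4 * (1 - 1 / γ) = (a - a / γ) / 4 := by ring
    linarith
  have hlim : Tendsto (fun v : ℝ => 2 * 5 ^ s * v ^ (a - 4 * s - a / γ)) (nhdsWithin 0 (Ioi 0))
      (nhds 0) := by
    have := (continuous_rpow_const hε.le).tendsto' 0 0 (zero_rpow hε.ne')
    simpa using (this.mono_left nhdsWithin_le_nhds).const_mul (2 * 5 ^ s)
  refine squeeze_zero' (Eventually.of_forall fun v => integral_nonneg fun ξ => by positivity)
    ?_ hlim
  filter_upwards [Ioo_mem_nhdsGT one_pos] with v hv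
  have hr : v ^ ((a - 1) - a / γ) ≤ v⁻¹ := by
    rw [← rpow_neg_one]
    exact rpow_le_rpow_of_exponent_ge hv.1 hv.2.le (by linarith)
  calc _ ≤ 2 * 5 ^ s * v ^ (1 - 4 * s) * v ^ ((a - 1) - a / γ) :=
        integral_one_add_sq_rpow_mul_rescaled_sq_le hs hv.1 hv.2.le (rpow_pos_of_pos hv.1 _).le hr
          (fun η => abs_le.2 ⟨by linarith [hg0 v η], hg1 v η⟩) (hsupp v hv)
    _ = 2 * 5 ^ s * v ^ (a - 4 * s - a / γ) := by
        rw [mul_assoc, ← rpow_add hv.1]; ring_nf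

theorem sobolev_norm_tendsto_zero (a γ s : ℝ) (ha : 1 < a) (hγ : 1 < γ) (hs : 0 ≤ s)
    (hcrit : s < a / 4 * (1 - 1 / γ)) (g : ℝ → ℝ → ℝ)
    (hg0 : ∀ v η, 0 ≤ g v η) (hg1 : ∀ v η, g v η ≤ 1)
    (hsupp : ∀ v ∈ Ioo (0:ℝ) 1, ∀ η : ℝ, v ^ ((a - 1) - a / γ) < |η| → g v η = 0)
    (hone : ∀ v ∈ Ioo (0:ℝ) 1, ∀ η : ℝ, |η| ≤ v ^ ((a - 1) - a / γ) / 2 → g v η = 1) :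
    Tendsto (fun v : ℝ => ∫ ξ : ℝ, (1 + ξ ^ 2) ^ s * (v * g v (v * ξ + 1 / v)) ^ 2)
      (nhdsWithin 0 (Ioi 0)) (nhds 0) :=
  sobolev_norm_tendsto_zero_general a γ s hs hcrit g hg0 hg1 hsupp
end

section
/- Let a > 1 and K(x) = (1/π)∫_0^∞ e^{−ξ^a} cos(xξ) dξ. Then there is a constant C (depending on a) such that |K(x)| ≤ C·|x|^{−2} for all x ≠ 0. -/
/-!
Integrating by parts twice against `cos (x ξ)` on `(0, ∞)` gives
`x² ∫ f(ξ) cos (x ξ) dξ = -∫ f''(ξ) cos (x ξ) dξ`: the boundary terms vanish at `∞` because `f` and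
`f'` are integrable with integrable derivatives, and at `0` because `sin 0 = 0` and `f'(0⁺) = 0`.
For `f ξ = exp (-ξ ^ a)` with `a > 1`, `f''` is a combination of `ξ ^ (a - 2) exp (-ξ ^ a)` and
`ξ ^ (2a - 2) exp (-ξ ^ a)`, both integrable on `(0, ∞)`, so `x² |K x|` is bounded by `∫ |f''| / π`.
-/

open Real Set MeasureTheory Filter Topology

section IntegrationByParts

variable {f f' f'' : ℝ → ℝ} {c : ℝ}

theorem MeasureTheory.IntegrableOn.mul_cos_mul {s : Set ℝ} (hf : IntegrableOn f s) (x : ℝ) :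
    IntegrableOn (fun ξ => f ξ * cos (x * ξ)) s :=
  Integrable.mul_bdd hf (by fun_prop : Continuous fun ξ => cos (x * ξ)).aestronglyMeasurable
    (ae_of_all _ fun ξ => by simpa only [norm_eq_abs] using abs_cos_le_one (x * ξ))

theorem MeasureTheory.IntegrableOn.mul_sin_mul {s : Set ℝ} (hf : IntegrableOn f s) (x : ℝ) :
    IntegrableOn (fun ξ => f ξ * sin (x * ξ)) s :=
  Integrable.mul_bdd hf (by fun_prop : Continuous fun ξ => sin (x * ξ)).aestronglyMeasurable
    (ae_of_all _ fun ξ => by simpa only [norm_eq_abs] using abs_sin_le_one (x * ξ))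

variable (hf : ∀ ξ ∈ Ioi 0, HasDerivAt f (f' ξ) ξ) (hf_int : IntegrableOn f (Ioi 0))
  (hf'_int : IntegrableOn f' (Ioi 0)) (hf_zero : Tendsto f (𝓝[>] 0) (𝓝 c))
include hf hf_int hf'_int hf_zero

theorem mul_integral_Ioi_mul_cos (x : ℝ) :
    x * ∫ ξ in Ioi 0, f ξ * cos (x * ξ) = -∫ ξ in Ioi 0, f' ξ * sin (x * ξ) := by
  have hsin (ξ : ℝ) : HasDerivAt (fun t => sin (x * t)) (cos (x * ξ) * x) ξ := by
    simpa using ((hasDerivAt_id ξ).const_mul x).sin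
  have h_zero : Tendsto (fun ξ => f ξ * sin (x * ξ)) (𝓝[>] 0) (𝓝 0) := by
    simpa using hf_zero.mul ((by fun_prop : Continuous fun ξ => sin (x * ξ)).tendsto' 0 0
      (by simp) |>.mono_left nhdsWithin_le_nhds)
  have h_infty : Tendsto (fun ξ => f ξ * sin (x * ξ)) atTop (𝓝 0) :=
    (tendsto_zero_of_hasDerivAt_of_integrableOn_Ioi hf hf'_int hf_int).zero_mul_isBoundedUnder_le
      (isBoundedUnder_of ⟨1, fun ξ => by simpa using abs_sin_le_one (x * ξ)⟩)
  have := integral_Ioi_mul_deriv_eq_deriv_mul hf (fun ξ _ => hsin ξ)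
    (IntegrableOn.congr_fun ((hf_int.mul_cos_mul x).mul_const x)
      (fun ξ _ => by simp only [Pi.mul_apply]; ring)
      measurableSet_Ioi)
    (hf'_int.mul_sin_mul x) h_zero h_infty
  rw [sub_zero, zero_sub] at this
  rw [← integral_const_mul, ← this]
  exact integral_congr_ae (ae_of_all _ fun ξ => by ring)

theorem mul_integral_Ioi_mul_sin (x : ℝ) :
    x * ∫ ξ in Ioi 0, f ξ * sin (x * ξ) = c + ∫ ξ in Ioi 0, f' ξ * cos (x * ξ) := by
  have hcos (ξ : ℝ) : HasDerivAt (fun t => cos (x * t)) (-(sin (x * ξ) * x)) ξ := by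
    simpa using ((hasDerivAt_id ξ).const_mul x).cos
  have h_zero : Tendsto (fun ξ => f ξ * cos (x * ξ)) (𝓝[>] 0) (𝓝 c) := by
    simpa using hf_zero.mul ((by fun_prop : Continuous fun ξ => cos (x * ξ)).tendsto' 0 1
      (by simp) |>.mono_left nhdsWithin_le_nhds)
  have h_infty : Tendsto (fun ξ => f ξ * cos (x * ξ)) atTop (𝓝 0) :=
    (tendsto_zero_of_hasDerivAt_of_integrableOn_Ioi hf hf'_int hf_int).zero_mul_isBoundedUnder_le
      (isBoundedUnder_of ⟨1, fun ξ => by simpa using abs_cos_le_one (x * ξ)⟩)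
  have := integral_Ioi_mul_deriv_eq_deriv_mul hf (fun ξ _ => hcos ξ)
    (IntegrableOn.congr_fun ((hf_int.mul_sin_mul x).mul_const (-x))
      (fun ξ _ => by simp only [Pi.mul_apply]; ring)
      measurableSet_Ioi)
    (hf'_int.mul_cos_mul x) h_zero h_infty
  have h_lhs :
      ∫ ξ in Ioi 0, f ξ * -(sin (x * ξ) * x) = -(x * ∫ ξ in Ioi 0, f ξ * sin (x * ξ)) := by
    rw [← integral_const_mul, ← integral_neg]
    exact integral_congr_ae (ae_of_all _ fun ξ => by ring)
  linarith

variable (hf' : ∀ ξ ∈ Ioi 0, HasDerivAt f' (f'' ξ) ξ) (hf''_int : IntegrableOn f'' (Ioi 0))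
  (hf'_zero : Tendsto f' (𝓝[>] 0) (𝓝 0))
include hf' hf''_int hf'_zero

theorem sq_mul_integral_Ioi_mul_cos (x : ℝ) :
    x ^ 2 * ∫ ξ in Ioi 0, f ξ * cos (x * ξ) = -∫ ξ in Ioi 0, f'' ξ * cos (x * ξ) := by
  rw [sq, mul_assoc, mul_integral_Ioi_mul_cos hf hf_int hf'_int hf_zero, mul_neg,
    mul_integral_Ioi_mul_sin hf' hf'_int hf''_int hf'_zero, zero_add]

theorem sq_mul_abs_integral_Ioi_mul_cos_le (x : ℝ) :
    x ^ 2 * |∫ ξ in Ioi 0, f ξ * cos (x * ξ)| ≤ ∫ ξ in Ioi 0, |f'' ξ| := by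
  rw [← abs_of_nonneg (sq_nonneg x), ← abs_mul,
    sq_mul_integral_Ioi_mul_cos hf hf_int hf'_int hf_zero hf' hf''_int hf'_zero, abs_neg,
    ← norm_eq_abs]
  refine norm_integral_le_of_norm_le hf''_int.abs (ae_of_all _ fun ξ => ?_)
  rw [norm_mul, norm_eq_abs]
  exact mul_le_of_le_one_right (abs_nonneg _) (by simpa using abs_cos_le_one (x * ξ))

end IntegrationByParts

section ExpNegRpow

variable {a ξ : ℝ}

theorem hasDerivAt_exp_neg_rpow (hξ : 0 < ξ) :
    HasDerivAt (fun t => exp (-t ^ a)) (-(a * ξ ^ (a - 1)) * exp (-ξ ^ a)) ξ := by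
  simpa [mul_comm] using (hasDerivAt_rpow_const (p := a) (Or.inl hξ.ne')).neg.exp

theorem hasDerivAt_neg_mul_rpow_mul_exp_neg_rpow (hξ : 0 < ξ) :
    HasDerivAt (fun t => -(a * t ^ (a - 1)) * exp (-t ^ a))
      ((a ^ 2 * ξ ^ (2 * a - 2) - a * (a - 1) * ξ ^ (a - 2)) * exp (-ξ ^ a)) ξ := by
  refine (((hasDerivAt_rpow_const (p := a - 1) (Or.inl hξ.ne')).const_mul a).neg.mul
    (hasDerivAt_exp_neg_rpow hξ)).congr_deriv ?_
  rw [show 2 * a - 2 = (a - 1) + (a - 1) by ring, rpow_add hξ, show a - 1 - 1 = a - 2 by ring,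
    Pi.neg_apply]
  ring

theorem integrableOn_exp_neg_rpow (ha : 0 < a) :
    IntegrableOn (fun ξ => exp (-ξ ^ a)) (Ioi 0) := by
  simpa using integrableOn_rpow_mul_exp_neg_rpow (s := 0) (by norm_num) ha

theorem integrableOn_neg_mul_rpow_mul_exp_neg_rpow (ha : 0 < a) :
    IntegrableOn (fun ξ => -(a * ξ ^ (a - 1)) * exp (-ξ ^ a)) (Ioi 0) :=
  IntegrableOn.congr_fun
    ((integrableOn_rpow_mul_exp_neg_rpow (s := a - 1) (by linarith) ha).const_mul (-a))
    (fun ξ _ => by ring) measurableSet_Ioi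

theorem integrableOn_rpow_sub_rpow_mul_exp_neg_rpow (ha : 1 < a) :
    IntegrableOn (fun ξ => (a ^ 2 * ξ ^ (2 * a - 2) - a * (a - 1) * ξ ^ (a - 2)) * exp (-ξ ^ a))
      (Ioi 0) :=
  IntegrableOn.congr_fun
    (((integrableOn_rpow_mul_exp_neg_rpow (s := 2 * a - 2) (by linarith) (by linarith)).const_mul
      (a ^ 2)).sub
      ((integrableOn_rpow_mul_exp_neg_rpow (s := a - 2) (by linarith) (by linarith)).const_mul
      (a * (a - 1))))
    (fun ξ _ => by simp only [Pi.sub_apply]; ring) measurableSet_Ioi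

theorem tendsto_exp_neg_rpow_nhdsGT_zero (ha : 0 ≤ a) :
    Tendsto (fun t => exp (-t ^ a)) (𝓝[>] 0) (𝓝 (exp (-0 ^ a))) :=
  (continuousAt_rpow_const 0 a (Or.inr ha)).neg.rexp.tendsto.mono_left nhdsWithin_le_nhds

theorem tendsto_neg_mul_rpow_mul_exp_neg_rpow_nhdsGT_zero (ha : 1 < a) :
    Tendsto (fun t => -(a * t ^ (a - 1)) * exp (-t ^ a)) (𝓝[>] 0) (𝓝 0) := by
  have hcont : ContinuousAt (fun t => -(a * t ^ (a - 1)) * exp (-t ^ a)) 0 :=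
    ((continuousAt_rpow_const 0 (a - 1) (Or.inr (by linarith))).const_mul a).neg.mul
      (continuousAt_rpow_const 0 a (Or.inr (by linarith))).neg.rexp
  simpa [zero_rpow (sub_ne_zero.2 ha.ne')] using hcont.tendsto.mono_left nhdsWithin_le_nhds

end ExpNegRpow

theorem kernel_decay (a : ℝ) (ha : 1 < a) :
    ∃ C : ℝ, 0 < C ∧ ∀ x : ℝ, x ≠ 0 →
      |(1 / Real.pi) * ∫ ξ in Ioi (0:ℝ), Real.exp (-ξ ^ a) * Real.cos (x * ξ)| ≤
        C / x ^ 2 := by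
  have ha0 : 0 < a := by linarith
  set M := ∫ ξ in Ioi 0,
    |(a ^ 2 * ξ ^ (2 * a - 2) - a * (a - 1) * ξ ^ (a - 2)) * exp (-ξ ^ a)|
  have hM : 0 ≤ M := setIntegral_nonneg measurableSet_Ioi fun _ _ => abs_nonneg _
  refine ⟨(M + 1) / π, by positivity, fun x hx => ?_⟩
  have hbound := sq_mul_abs_integral_Ioi_mul_cos_le (fun _ => hasDerivAt_exp_neg_rpow)
    (integrableOn_exp_neg_rpow ha0) (integrableOn_neg_mul_rpow_mul_exp_neg_rpow ha0)
    (tendsto_exp_neg_rpow_nhdsGT_zero ha0.le) (fun _ => hasDerivAt_neg_mul_rpow_mul_exp_neg_rpow)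
    (integrableOn_rpow_sub_rpow_mul_exp_neg_rpow ha)
    (tendsto_neg_mul_rpow_mul_exp_neg_rpow_nhdsGT_zero ha) x
  rw [abs_mul, abs_of_pos (by positivity), le_div_iff₀ (by positivity)]
  calc 1 / π * |∫ ξ in Ioi 0, exp (-ξ ^ a) * cos (x * ξ)| * x ^ 2
      = (x ^ 2 * |∫ ξ in Ioi 0, exp (-ξ ^ a) * cos (x * ξ)|) / π := by ring
    _ ≤ (M + 1) / π := by gcongr; linarith
end
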